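/- Let G be a finite simple connected graph with at least one edge such that μ(G) = ν(G) (i.e., G is a Cameron–Walker graph). If G is not isomorphic to a star triangle (friendship graph) F_m with m even, then deg h_G = α(G); if G is isomorphic to F_m with m even (m ≥ 2), then deg h_G = α(G) − 1. -/

import Mathlib

open Finset Polynomial

/-- Every subset of a finite type gets a `Fintype` instance (classically). -/
noncomputable instance fintypeOfSet {V : Type*} [Finite V] (s : Set V) : Fintype ↥s :=
  Fintype.ofFinite _

/-- `s` is an independent set of the graph `G`: no two of its vertices are adjacent. -/
def IsIndepSet {V : Type*} (G : SimpleGraph V) (s : Finset V) : Prop :=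
  ∀ u ∈ s, ∀ v ∈ s, ¬ G.Adj u v

/-- The finset of all independent sets of `G`. -/
noncomputable def indepFinsets {V : Type*} [Fintype V] (G : SimpleGraph V) :
    Finset (Finset V) :=
  @Finset.filter _ (fun s => IsIndepSet G s) (Classical.decPred _) Finset.univ

/-- `sCount G i` is the number of independent sets of size `i` in `G`. -/
noncomputable def sCount {V : Type*} [Fintype V] (G : SimpleGraph V) (i : ℕ) : ℕ :=
  ((indepFinsets G).filter (fun s => s.card = i)).card

/-- The independence number `α(G)`: the maximum size of an independent set. -/
noncomputable def indepNum {V : Type*} [Fintype V] (G : SimpleGraph V) : ℕ :=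
  (indepFinsets G).sup Finset.card

/-- The independence polynomial `I(G,t) = Σ_i s_i(G) t^i ∈ ℤ[t]`. -/
noncomputable def indepPoly {V : Type*} [Fintype V] (G : SimpleGraph V) : Polynomial ℤ :=
  ∑ i ∈ Finset.range (indepNum G + 1), Polynomial.C (sCount G i : ℤ) * Polynomial.X ^ i

/-- The h-polynomial of the edge ideal of `G`:
`h_G(t) = Σ_i s_i(G) t^i (1-t)^{α(G)-i} ∈ ℤ[t]`. -/
noncomputable def hPoly {V : Type*} [Fintype V] (G : SimpleGraph V) : Polynomial ℤ :=
  ∑ i ∈ Finset.range (indepNum G + 1),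
    Polynomial.C (sCount G i : ℤ) * Polynomial.X ^ i *
      (1 - Polynomial.X) ^ (indepNum G - i)

/-- The degree of a vertex in a finite simple graph. -/
noncomputable def deg {V : Type*} [Fintype V] (G : SimpleGraph V) (v : V) : ℕ :=
  (@Finset.filter _ (fun u => G.Adj v u) (Classical.decPred _) Finset.univ).card

/-- The star triangle (friendship graph) `F_m`: `m` triangles sharing the single common
vertex `none`; the vertex `some (i, a)` is the `a`-th outer vertex of the `i`-th triangle. -/
def friendship (m : ℕ) : SimpleGraph (Option (Fin m × Fin 2)) where
  Adj x y := x ≠ y ∧ (x = none ∨ y = none ∨ ∃ i a b, x = some (i, a) ∧ y = some (i, b))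
  symm := by
    constructor
    rintro x y ⟨hne, h⟩
    refine ⟨hne.symm, ?_⟩
    rcases h with h | h | ⟨i, a, b, hx, hy⟩
    · exact Or.inr (Or.inl h)
    · exact Or.inl h
    · exact Or.inr (Or.inr ⟨i, b, a, hy, hx⟩)
  loopless := ⟨fun x h => h.1 rfl⟩

/-- `M` is (the edge set of) a matching of `G`: a set of pairwise disjoint edges. -/
def IsMatchingSet {V : Type*} (G : SimpleGraph V) (M : Finset (Sym2 V)) : Prop :=
  (↑M : Set (Sym2 V)) ⊆ G.edgeSet ∧
    ∀ e ∈ M, ∀ f ∈ M, e ≠ f → ∀ x : V, x ∈ e → x ∉ f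

/-- The matching number `μ(G)`: the maximum cardinality of a matching of `G`. -/
noncomputable def matchNum {V : Type*} (G : SimpleGraph V) : ℕ :=
  sSup {k | ∃ M : Finset (Sym2 V), IsMatchingSet G M ∧ M.card = k}

/-- `M` is an induced matching of `G`: a matching such that the induced subgraph on the
endpoints of `M` has edge set exactly `M`. -/
def IsInducedMatchingSet {V : Type*} (G : SimpleGraph V) (M : Finset (Sym2 V)) : Prop :=
  IsMatchingSet G M ∧
    ∀ x y : V, (∃ e ∈ M, x ∈ e) → (∃ e ∈ M, y ∈ e) → G.Adj x y → s(x, y) ∈ M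

/-- The induced matching number `ν(G)`: the maximum cardinality of an induced matching. -/
noncomputable def indMatchNum {V : Type*} (G : SimpleGraph V) : ℕ :=
  sSup {k | ∃ M : Finset (Sym2 V), IsInducedMatchingSet G M ∧ M.card = k}

/-- The alternating sum over independent sets, `I(G,-1)` up to sign. -/
noncomputable def epsI {V : Type*} [Fintype V] (G : SimpleGraph V) : ℤ :=
  ∑ s ∈ indepFinsets G, (-1) ^ s.card

section Generic
variable {V : Type*} [Fintype V] (G : SimpleGraph V)

lemma mem_indepFinsets {s : Finset V} : s ∈ indepFinsets G ↔ IsIndepSet G s := by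
  simp [indepFinsets]

lemma card_le_indepNum {s : Finset V} (hs : s ∈ indepFinsets G) : s.card ≤ indepNum G :=
  Finset.le_sup hs

lemma hPoly_eq : hPoly G =
    ∑ s ∈ indepFinsets G, X ^ s.card * (1 - X) ^ (indepNum G - s.card) := by
  classical
  rw [← Finset.sum_fiberwise_of_maps_to (g := Finset.card) (t := Finset.range (indepNum G + 1))
    (fun s hs => Finset.mem_range.mpr (Nat.lt_succ_of_le (card_le_indepNum G hs)))
    (fun s => (X:ℤ[X]) ^ s.card * (1 - X) ^ (indepNum G - s.card))]
  unfold hPoly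
  refine Finset.sum_congr rfl fun i _hi => ?_
  rw [Finset.sum_congr rfl (fun s hs => by
    rw [(Finset.mem_filter.mp hs).2]), Finset.sum_const]
  have h2 : sCount G i = ((indepFinsets G).filter (fun s => s.card = i)).card := rfl
  rw [← h2, nsmul_eq_mul, map_natCast (C : ℤ →+* ℤ[X]), mul_assoc]

lemma coeff_one_sub_X_pow (d j : ℕ) (hj : j ≤ d) :
    ((1 - X : ℤ[X]) ^ d).coeff j = (-1) ^ j * d.choose j := by
  have h : (1 - X : ℤ[X]) = (-X) + 1 := by ring
  rw [h, add_pow, finset_sum_coeff]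
  have key : ∀ m ∈ Finset.range (d + 1),
      ((-X : ℤ[X]) ^ m * 1 ^ (d - m) * (d.choose m : ℤ[X])).coeff j
        = if j = m then (-1) ^ m * (d.choose m : ℤ) else 0 := by
    intro m _
    have e0 : (-X : ℤ[X]) = C (-1) * X := by simp
    have e1 : (-X : ℤ[X]) ^ m * 1 ^ (d - m) * (d.choose m : ℤ[X])
        = C ((-1) ^ m * (d.choose m : ℤ)) * X ^ m := by
      rw [one_pow, mul_one, ← map_natCast (C : ℤ →+* ℤ[X]) (d.choose m), e0, mul_pow,
        ← C_pow, C_mul]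
      ring
    rw [e1, coeff_C_mul, coeff_X_pow]
    by_cases hmj : j = m <;> simp [hmj]
  rw [Finset.sum_congr rfl key, Finset.sum_ite_eq (Finset.range (d+1)) j]
  simp [Nat.lt_succ_of_le hj]

lemma natDegree_hPoly_le : (hPoly G).natDegree ≤ indepNum G := by
  unfold hPoly
  refine Polynomial.natDegree_sum_le_of_forall_le _ _ fun i hi => ?_
  have hi' : i ≤ indepNum G := Nat.lt_succ_iff.mp (Finset.mem_range.mp hi)
  calc (C (sCount G i : ℤ) * X ^ i * (1 - X) ^ (indepNum G - i)).natDegree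
      ≤ (C (sCount G i : ℤ) * X ^ i).natDegree + ((1 - X : ℤ[X]) ^ (indepNum G - i)).natDegree :=
        natDegree_mul_le
    _ ≤ i + (indepNum G - i) := by
        gcongr
        · calc (C (sCount G i : ℤ) * X ^ i).natDegree
              ≤ (C (sCount G i : ℤ)).natDegree + (X ^ i : ℤ[X]).natDegree := natDegree_mul_le
          _ ≤ i := by simp
        · have h1X : (1 - X : ℤ[X]).natDegree ≤ 1 :=
            le_trans (natDegree_sub_le _ _) (by simp)
          calc ((1 - X : ℤ[X]) ^ (indepNum G - i)).natDegree
              ≤ (indepNum G - i) * (1 - X : ℤ[X]).natDegree := natDegree_pow_le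
          _ ≤ (indepNum G - i) * 1 := Nat.mul_le_mul_left _ h1X
          _ = indepNum G - i := mul_one _
    _ ≤ indepNum G := by omega

lemma coeff_hPoly_term (n c : ℕ) (h : c ≤ n) :
    ((X : ℤ[X]) ^ c * (1 - X) ^ (n - c)).coeff n = (-1) ^ (n - c) := by
  have h0 := Polynomial.coeff_X_pow_mul ((1 - X : ℤ[X]) ^ (n - c)) c (n - c)
  rw [Nat.sub_add_cancel h] at h0
  rw [h0, coeff_one_sub_X_pow _ _ le_rfl, Nat.choose_self]
  ring

lemma coeff_hPoly_top :
    (hPoly G).coeff (indepNum G) = (-1) ^ (indepNum G) * epsI G := by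
  rw [hPoly_eq, finset_sum_coeff, epsI, Finset.mul_sum]
  refine Finset.sum_congr rfl fun s hs => ?_
  have hc : s.card ≤ indepNum G := card_le_indepNum G hs
  rw [coeff_hPoly_term _ _ hc]
  have hcc : ((-1 : ℤ)) ^ s.card * (-1) ^ s.card = 1 := by
    rw [← pow_add, ← two_mul, pow_mul]
    norm_num
  calc (-1 : ℤ) ^ (indepNum G - s.card)
      = (-1) ^ (indepNum G - s.card) * ((-1) ^ s.card * (-1) ^ s.card) := by rw [hcc, mul_one]
    _ = ((-1) ^ (indepNum G - s.card) * (-1) ^ s.card) * (-1) ^ s.card := by ring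
    _ = (-1) ^ (indepNum G) * (-1) ^ s.card := by rw [← pow_add, Nat.sub_add_cancel hc]

lemma natDegree_hPoly_of_epsI_ne (h : epsI G ≠ 0) :
    (hPoly G).natDegree = indepNum G := by
  refine le_antisymm (natDegree_hPoly_le G) ?_
  refine Polynomial.le_natDegree_of_ne_zero ?_
  rw [coeff_hPoly_top]
  intro hc
  rcases mul_eq_zero.mp hc with h1 | h1
  · exact absurd h1 (pow_ne_zero _ (by norm_num))
  · exact h h1

end Generic


section Transfer
variable {V V' : Type*} [Fintype V] [Fintype V'] (G : SimpleGraph V) (H : SimpleGraph V')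

lemma indepFinsets_map (e : G ≃g H) :
    indepFinsets H
      = (indepFinsets G).map (Finset.mapEmbedding e.toEquiv.toEmbedding).toEmbedding := by
  ext t
  simp only [Finset.mem_map, RelEmbedding.coe_toEmbedding, Finset.mapEmbedding_apply]
  constructor
  · intro ht
    refine ⟨t.map e.symm.toEquiv.toEmbedding, ?_, ?_⟩
    · rw [mem_indepFinsets] at ht ⊢
      intro u hu v hv hadj
      rw [Finset.mem_map] at hu hv
      obtain ⟨x, hx, rfl⟩ := hu
      obtain ⟨y, hy, rfl⟩ := hv
      exact ht x hx y hy (e.symm.map_adj_iff.mp hadj)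
    · rw [Finset.map_map]
      ext y
      simp
  · rintro ⟨s, hs, rfl⟩
    rw [mem_indepFinsets] at hs ⊢
    intro u hu v hv
    rw [Finset.mem_map] at hu hv
    obtain ⟨x, hx, rfl⟩ := hu
    obtain ⟨y, hy, rfl⟩ := hv
    exact fun hadj => hs x hx y hy (e.map_adj_iff.mp hadj)

lemma indepNum_iso (e : G ≃g H) : indepNum G = indepNum H := by
  unfold indepNum
  rw [indepFinsets_map G H e, Finset.sup_map]
  refine (Finset.sup_congr rfl fun s _ => ?_).symm
  simp only [Function.comp_apply, RelEmbedding.coe_toEmbedding, Finset.mapEmbedding_apply,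
    Finset.card_map]

lemma sum_card_iso (e : G ≃g H) {R : Type*} [AddCommMonoid R] (F : ℕ → R) :
    ∑ t ∈ indepFinsets H, F t.card = ∑ s ∈ indepFinsets G, F s.card := by
  rw [indepFinsets_map G H e, Finset.sum_map]
  refine Finset.sum_congr rfl fun s _ => ?_
  simp only [RelEmbedding.coe_toEmbedding, Finset.mapEmbedding_apply, Finset.card_map]

lemma sCount_iso (e : G ≃g H) (i : ℕ) : sCount G i = sCount H i := by
  unfold sCount
  rw [Finset.card_filter, Finset.card_filter,
    sum_card_iso G H e (fun c => if c = i then 1 else 0)]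

lemma hPoly_iso (e : G ≃g H) : hPoly G = hPoly H := by
  unfold hPoly
  rw [indepNum_iso G H e]
  exact Finset.sum_congr rfl fun i _ => by rw [sCount_iso G H e i]

lemma epsI_iso (e : G ≃g H) : epsI G = epsI H :=
  (sum_card_iso G H e (fun c => (-1 : ℤ) ^ c)).symm

end Transfer


namespace FriendHelp

variable {m : ℕ}

/-- encoding of a `none`-free independent set of the friendship graph. -/
def Phi (f : Fin m → Option (Fin 2)) : Finset (Option (Fin m × Fin 2)) :=
  (Finset.univ.filter (fun i => (f i).isSome)).image
    (fun i => Option.map (fun a => (i, a)) (f i))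

lemma none_not_mem_Phi (f : Fin m → Option (Fin 2)) : none ∉ Phi f := by
  intro h
  simp only [Phi, Finset.mem_image, Finset.mem_filter] at h
  obtain ⟨i, ⟨_, hi⟩, hmap⟩ := h
  rw [Option.map_eq_none_iff] at hmap
  rw [hmap] at hi
  simp at hi

lemma mem_Phi_some (f : Fin m → Option (Fin 2)) (i : Fin m) (a : Fin 2) :
    some (i, a) ∈ Phi f ↔ f i = some a := by
  simp only [Phi, Finset.mem_image, Finset.mem_filter, Finset.mem_univ, true_and]
  constructor
  · rintro ⟨j, hj, hmap⟩
    rw [Option.map_eq_some_iff] at hmap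
    obtain ⟨b, hb, hba⟩ := hmap
    simp only [Prod.mk.injEq] at hba
    obtain ⟨rfl, rfl⟩ := hba
    exact hb
  · intro h
    exact ⟨i, by simp [h], by simp [h]⟩

lemma Phi_injective : Function.Injective (Phi (m := m)) := by
  intro f g h
  funext i
  rcases hf : f i with _ | a
  · rcases hg : g i with _ | b
    · rfl
    · exfalso
      have hmem : some (i, b) ∈ Phi g := (mem_Phi_some g i b).mpr hg
      rw [← h, mem_Phi_some, hf] at hmem
      exact nomatch hmem
  · have hmem : some (i, a) ∈ Phi f := (mem_Phi_some f i a).mpr hf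
    rw [h, mem_Phi_some] at hmem
    exact hmem.symm

lemma card_Phi (f : Fin m → Option (Fin 2)) :
    (Phi f).card = (Finset.univ.filter (fun i => (f i).isSome)).card := by
  refine Finset.card_image_of_injOn ?_
  intro i hi j hj hij
  simp only [Finset.coe_filter, Set.mem_setOf_eq, Finset.mem_univ, true_and] at hi hj
  rw [Option.isSome_iff_exists] at hi hj
  obtain ⟨a, ha⟩ := hi; obtain ⟨b, hb⟩ := hj
  simp only [ha, hb, Option.map_some, Option.some.injEq, Prod.mk.injEq] at hij
  exact hij.1

lemma adj_none {x : Option (Fin m × Fin 2)} (hx : x ≠ none) :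
    (friendship m).Adj none x :=
  ⟨fun h => hx h.symm, Or.inl rfl⟩

lemma adj_some_iff {i j : Fin m} {a b : Fin 2} :
    (friendship m).Adj (some (i, a)) (some (j, b)) ↔ i = j ∧ a ≠ b := by
  constructor
  · rintro ⟨hne, h⟩
    rcases h with h | h | ⟨i', a', b', h1, h2⟩
    · exact nomatch h
    · exact nomatch h
    · simp only [Option.some.injEq, Prod.mk.injEq] at h1 h2
      obtain ⟨rfl, rfl⟩ := h1
      obtain ⟨rfl, rfl⟩ := h2
      exact ⟨rfl, fun hab => hne (by rw [hab])⟩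
  · rintro ⟨rfl, hab⟩
    exact ⟨by simp [hab], Or.inr (Or.inr ⟨i, a, b, rfl, rfl⟩)⟩

lemma isIndep_Phi (f : Fin m → Option (Fin 2)) : IsIndepSet (friendship m) (Phi f) := by
  intro u hu v hv hadj
  rcases u with _ | ⟨i, a⟩
  · exact none_not_mem_Phi f hu
  rcases v with _ | ⟨j, b⟩
  · exact none_not_mem_Phi f hv
  rw [adj_some_iff] at hadj
  obtain ⟨rfl, hab⟩ := hadj
  rw [mem_Phi_some] at hu hv
  rw [hu] at hv
  exact hab (Option.some.inj hv)

lemma isIndep_none : IsIndepSet (friendship m) ({none} : Finset (Option (Fin m × Fin 2))) := by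
  intro u hu v hv hadj
  rw [Finset.mem_singleton] at hu hv
  subst hu; subst hv
  exact hadj.1 rfl

lemma indep_cases {s : Finset (Option (Fin m × Fin 2))}
    (hs : IsIndepSet (friendship m) s) : s = {none} ∨ ∃ f, s = Phi f := by
  classical
  by_cases hn : (none : Option (Fin m × Fin 2)) ∈ s
  · left
    ext x
    rw [Finset.mem_singleton]
    constructor
    · intro hx
      by_contra hne
      exact hs none hn x hx (adj_none hne)
    · rintro rfl; exact hn
  · right
    refine ⟨fun i => if h : ∃ a, some (i, a) ∈ s then some h.choose else none, ?_⟩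
    ext x
    rcases x with _ | ⟨i, a⟩
    · simp only [none_not_mem_Phi]
      simp [hn]
    · rw [mem_Phi_some]
      constructor
      · intro hx
        have hex : ∃ a', some (i, a') ∈ s := ⟨a, hx⟩
        rw [dif_pos hex]
        have hc := hex.choose_spec
        congr 1
        by_contra hca
        exact hs _ hc _ hx (adj_some_iff.mpr ⟨rfl, hca⟩)
      · intro hfi
        by_cases hex : ∃ a', some (i, a') ∈ s
        · rw [dif_pos hex] at hfi
          have := hex.choose_spec
          rwa [Option.some.inj hfi] at this
        · rw [dif_neg hex] at hfi
          exact nomatch hfi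

lemma none_singleton_not_mem_image :
    ({none} : Finset (Option (Fin m × Fin 2))) ∉ Finset.image Phi Finset.univ := by
  intro h
  rw [Finset.mem_image] at h
  obtain ⟨f, _, hf⟩ := h
  exact none_not_mem_Phi f (by rw [hf]; exact Finset.mem_singleton_self _)

lemma indepFinsets_friendship :
    indepFinsets (friendship m)
      = insert ({none} : Finset (Option (Fin m × Fin 2))) (Finset.image Phi Finset.univ) := by
  classical
  ext s
  rw [mem_indepFinsets, Finset.mem_insert, Finset.mem_image]
  constructor
  · intro hs
    rcases indep_cases hs with h | ⟨f, h⟩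
    · exact Or.inl h
    · exact Or.inr ⟨f, Finset.mem_univ f, h.symm⟩
  · rintro (rfl | ⟨f, _, rfl⟩)
    · exact isIndep_none
    · exact isIndep_Phi f

lemma sum_indep_friendship {R : Type*} [CommRing R] (hm : 1 ≤ m) (u v : R) :
    ∑ s ∈ indepFinsets (friendship m), u ^ s.card * v ^ (m - s.card)
      = u * v ^ (m - 1) + (v + 2 * u) ^ m := by
  classical
  rw [indepFinsets_friendship, Finset.sum_insert none_singleton_not_mem_image]
  have h1 : (({none} : Finset (Option (Fin m × Fin 2)))).card = 1 := rfl
  rw [h1, pow_one]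
  congr 1
  rw [Finset.sum_image (fun f _ g _ h => Phi_injective h)]
  have key : ∀ f : Fin m → Option (Fin 2),
      u ^ (Phi f).card * v ^ (m - (Phi f).card)
        = ∏ i : Fin m, (if (f i).isSome then u else v) := by
    intro f
    rw [card_Phi, Finset.prod_ite (fun _ => u) (fun _ => v), Finset.prod_const,
      Finset.prod_const]
    congr 1
    have h4 := Finset.card_filter_add_card_filter_not
      (s := (Finset.univ : Finset (Fin m))) (fun i => (f i).isSome)
    rw [Finset.card_univ, Fintype.card_fin] at h4
    congr 1
    omega
  rw [Finset.sum_congr rfl (fun f _ => key f)]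
  have hps : (∑ f ∈ (Finset.univ : Finset (Fin m → Option (Fin 2))),
        ∏ i : Fin m, (if (f i).isSome then u else v))
      = ∏ _i : Fin m, ∑ o : Option (Fin 2), (if o.isSome then u else v) := by
    rw [← Fintype.piFinset_univ]
    exact (Finset.prod_univ_sum (fun _ => (Finset.univ : Finset (Option (Fin 2))))
      (fun _i (o : Option (Fin 2)) => if o.isSome then u else v)).symm
  rw [hps]
  have h2 : ∀ i : Fin m, (∑ o : Option (Fin 2), (if o.isSome then u else v)) = v + 2 * u := by
    intro i
    rw [Fintype.sum_option]
    simp only [Option.isSome_none, Bool.false_eq_true, if_false, Option.isSome_some, if_true]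
    rw [Finset.sum_const, Finset.card_univ, Fintype.card_fin, two_smul]
    ring
  rw [Finset.prod_congr rfl (fun i _ => h2 i), Finset.prod_const, Finset.card_univ,
    Fintype.card_fin]

lemma indepNum_friendship (hm : 1 ≤ m) : indepNum (friendship m) = m := by
  classical
  apply le_antisymm
  · refine Finset.sup_le fun s hs => ?_
    rw [indepFinsets_friendship, Finset.mem_insert] at hs
    rcases hs with rfl | hs
    · simpa using hm
    · rw [Finset.mem_image] at hs
      obtain ⟨f, _, rfl⟩ := hs
      rw [card_Phi]
      calc (Finset.univ.filter (fun i => (f i).isSome)).card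
          ≤ (Finset.univ : Finset (Fin m)).card := Finset.card_filter_le _ _
        _ = m := by rw [Finset.card_univ, Fintype.card_fin]
  · have hmem : Phi (fun _ : Fin m => some (0 : Fin 2)) ∈ indepFinsets (friendship m) := by
      rw [indepFinsets_friendship, Finset.mem_insert, Finset.mem_image]
      exact Or.inr ⟨_, Finset.mem_univ _, rfl⟩
    have hcard : (Phi (fun _ : Fin m => some (0 : Fin 2))).card = m := by
      rw [card_Phi]
      simp
    calc m = (Phi (fun _ : Fin m => some (0 : Fin 2))).card := hcard.symm
      _ ≤ indepNum (friendship m) := Finset.le_sup hmem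

end FriendHelp


namespace FriendHelp
variable {m : ℕ}

lemma hPoly_friendship (hm : 1 ≤ m) :
    hPoly (friendship m) = X * (1 - X) ^ (m - 1) + ((1 - X) + 2 * X) ^ m := by
  rw [hPoly_eq, indepNum_friendship hm, sum_indep_friendship hm X (1 - X)]

lemma epsI_friendship (hm : 1 ≤ m) : epsI (friendship m) = (-1) ^ m - 1 := by
  have h : epsI (friendship m)
      = ∑ s ∈ indepFinsets (friendship m), (-1 : ℤ) ^ s.card * 1 ^ (m - s.card) := by
    unfold epsI
    exact Finset.sum_congr rfl fun s _ => by rw [one_pow, mul_one]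
  rw [h, sum_indep_friendship hm (-1 : ℤ) 1]
  ring

lemma natDegree_hPoly_friendship_even (hm : 2 ≤ m) (he : Even m) :
    (hPoly (friendship m)).natDegree = m - 1 := by
  have hm1 : 1 ≤ m := by omega
  have hsucc : m - 1 + 1 = m := by omega
  have hsucc2 : m - 2 + 1 = m - 1 := by omega
  have hform : hPoly (friendship m) = X * (1 - X) ^ (m - 1) + (X + 1) ^ m := by
    rw [hPoly_friendship hm1]
    ring
  have hXle : (X : ℤ[X]).natDegree ≤ 1 := by simp
  have h1X : (1 - X : ℤ[X]).natDegree ≤ 1 := le_trans (natDegree_sub_le _ _) (by simp)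
  have hX1 : (X + 1 : ℤ[X]).natDegree ≤ 1 := le_trans (natDegree_add_le _ _) (by simp)
  have hdeg_le : (hPoly (friendship m)).natDegree ≤ m := by
    rw [hform]
    refine le_trans (natDegree_add_le _ _) (max_le ?_ ?_)
    · calc (X * (1 - X) ^ (m - 1) : ℤ[X]).natDegree
          ≤ (X : ℤ[X]).natDegree + ((1 - X : ℤ[X]) ^ (m - 1)).natDegree := natDegree_mul_le
        _ ≤ 1 + (m - 1) * 1 := by
            gcongr
            exact le_trans natDegree_pow_le (Nat.mul_le_mul_left _ h1X)
        _ ≤ m := by omega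
    · calc ((X + 1 : ℤ[X]) ^ m).natDegree ≤ m * (X + 1 : ℤ[X]).natDegree :=
          natDegree_pow_le
        _ ≤ m * 1 := Nat.mul_le_mul_left _ hX1
        _ = m := mul_one m
  have hodd : Odd (m - 1) := Nat.Even.sub_odd hm1 he odd_one
  have hcm : (hPoly (friendship m)).coeff m = 0 := by
    have hA : (X * (1 - X) ^ (m - 1) : ℤ[X]).coeff m = (-1 : ℤ) ^ (m - 1) := by
      have hx := Polynomial.coeff_X_mul ((1 - X : ℤ[X]) ^ (m - 1)) (m - 1)
      rw [hsucc] at hx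
      rw [hx, coeff_one_sub_X_pow _ _ le_rfl, Nat.choose_self]
      ring
    have hB : ((X + 1 : ℤ[X]) ^ m).coeff m = 1 := by
      rw [coeff_X_add_one_pow, Nat.choose_self, Nat.cast_one]
    rw [hform, coeff_add, hA, hB, hodd.neg_one_pow]
    ring
  have hcm1 : (hPoly (friendship m)).coeff (m - 1) = ((m - 1 : ℕ) : ℤ) + (m : ℤ) := by
    have hle : m - 2 ≤ m - 1 := by omega
    have heven2 : Even (m - 2) := by
      obtain ⟨k, hk⟩ := he
      exact ⟨k - 1, by omega⟩
    have hch1 : (m - 1).choose (m - 2) = m - 1 := by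
      have h' : m - 2 = (m - 1) - 1 := by omega
      rw [h', Nat.choose_symm (by omega), Nat.choose_one_right]
    have hch2 : m.choose (m - 1) = m := by
      calc m.choose (m - 1) = m.choose 1 := Nat.choose_symm (by omega)
        _ = m := Nat.choose_one_right m
    have hA1 : (X * (1 - X) ^ (m - 1) : ℤ[X]).coeff (m - 1) = ((m - 1 : ℕ) : ℤ) := by
      have hx := Polynomial.coeff_X_mul ((1 - X : ℤ[X]) ^ (m - 1)) (m - 2)
      rw [hsucc2] at hx
      rw [hx, coeff_one_sub_X_pow _ _ hle, heven2.neg_one_pow, hch1]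
      ring
    have hB1 : ((X + 1 : ℤ[X]) ^ m).coeff (m - 1) = (m : ℤ) := by
      rw [coeff_X_add_one_pow, hch2]
    rw [hform, coeff_add, hA1, hB1]
  have hne : (hPoly (friendship m)).coeff (m - 1) ≠ 0 := by
    rw [hcm1]
    have h0 : (0 : ℤ) ≤ ((m - 1 : ℕ) : ℤ) := Int.natCast_nonneg _
    have h2 : (2 : ℤ) ≤ (m : ℤ) := by exact_mod_cast hm
    omega
  refine le_antisymm ?_ (le_natDegree_of_ne_zero hne)
  rw [natDegree_le_iff_coeff_eq_zero]
  intro N hN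
  have hcases : N = m ∨ m < N := by omega
  rcases hcases with rfl | hlt
  · exact hcm
  · exact coeff_eq_zero_of_natDegree_lt (lt_of_le_of_lt hdeg_le hlt)

end FriendHelp

namespace CW
variable {V : Type*} [Fintype V]

noncomputable def av (e : Sym2 V) : V := (Quot.out e).1
noncomputable def bv (e : Sym2 V) : V := (Quot.out e).2

lemma mk_av_bv (e : Sym2 V) : s(av e, bv e) = e := by
  have h : (av e, bv e) = Quot.out e := rfl
  exact Quot.out_eq e

lemma mem_iff_av_bv {x : V} {e : Sym2 V} : x ∈ e ↔ x = av e ∨ x = bv e := by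
  conv_lhs => rw [← mk_av_bv e]
  exact Sym2.mem_iff

lemma av_mem (e : Sym2 V) : av e ∈ e := mem_iff_av_bv.mpr (Or.inl rfl)
lemma bv_mem (e : Sym2 V) : bv e ∈ e := mem_iff_av_bv.mpr (Or.inr rfl)

lemma not_mem_sym2 {a b z : V} (h1 : z ≠ a) (h2 : z ≠ b) : z ∉ s(a,b) := by
  rw [Sym2.mem_iff]
  tauto

/-- `x` is not covered by the matching `M`. -/
def Wp (M : Finset (Sym2 V)) (x : V) : Prop := ∀ e ∈ M, x ∉ e

variable {G : SimpleGraph V} {M : Finset (Sym2 V)}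

lemma adj_av_bv (hM : IsInducedMatchingSet G M) {e : Sym2 V} (he : e ∈ M) :
    G.Adj (av e) (bv e) := by
  have : e ∈ G.edgeSet := hM.1.1 he
  rw [← mk_av_bv e] at this
  exact G.mem_edgeSet.mp this

lemma av_ne_bv (hM : IsInducedMatchingSet G M) {e : Sym2 V} (he : e ∈ M) :
    av e ≠ bv e := G.ne_of_adj (adj_av_bv hM he)

lemma edge_eq_of_mem (hM : IsInducedMatchingSet G M) {e f : Sym2 V} {x : V}
    (he : e ∈ M) (hf : f ∈ M) (hxe : x ∈ e) (hxf : x ∈ f) : e = f := by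
  by_contra hne
  exact hM.1.2 e he f hf hne x hxe hxf

lemma wp_not_endpoint {x : V} (hx : Wp M x) {e : Sym2 V} (he : e ∈ M) {y : V}
    (hy : y ∈ e) : x ≠ y := fun h => hx e he (h ▸ hy)

/-- Two uncovered vertices are never adjacent (else the matching extends). -/
lemma no_W_adj (hM : IsInducedMatchingSet G M)
    (hmax : ∀ N : Finset (Sym2 V), IsMatchingSet G N → N.card ≤ M.card)
    {u w : V} (hu : Wp M u) (hw : Wp M w) (hadj : G.Adj u w) : False := by
  classical
  have hne : u ≠ w := G.ne_of_adj hadj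
  have hnm : s(u,w) ∉ M := fun h => hu _ h (Sym2.mem_mk_left u w)
  have hN : IsMatchingSet G (insert s(u,w) M) := by
    constructor
    · intro e he
      rw [Finset.mem_coe, Finset.mem_insert] at he
      rcases he with rfl | he
      · exact G.mem_edgeSet.mpr hadj
      · exact hM.1.1 he
    · intro e he f hf hef x hxe
      rw [Finset.mem_insert] at he hf
      rcases he with rfl | he <;> rcases hf with rfl | hf
      · exact absurd rfl hef
      · rcases Sym2.mem_iff.mp hxe with rfl | rfl
        · exact hu f hf
        · exact hw f hf
      · intro hxf
        rcases Sym2.mem_iff.mp hxf with rfl | rfl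
        · exact hu e he hxe
        · exact hw e he hxe
      · exact hM.1.2 e he f hf hef x hxe
  have hle := hmax _ hN
  rw [Finset.card_insert_of_notMem hnm] at hle
  omega

/-- Two distinct uncovered vertices cannot attach to the two distinct endpoints of a
single matching edge. -/
lemma no_double_attach (hM : IsInducedMatchingSet G M)
    (hmax : ∀ N : Finset (Sym2 V), IsMatchingSet G N → N.card ≤ M.card)
    {e : Sym2 V} (he : e ∈ M) {x y u w : V} (hx : x ∈ e) (hy : y ∈ e) (hxy : x ≠ y)
    (hu : Wp M u) (hw : Wp M w) (huw : u ≠ w)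
    (hux : G.Adj u x) (hwy : G.Adj w y) : False := by
  classical
  have hux' : u ≠ x := G.ne_of_adj hux
  have hwy' : w ≠ y := G.ne_of_adj hwy
  have h1 : s(w,y) ∉ M.erase e := fun h => hw _ (Finset.mem_of_mem_erase h) (Sym2.mem_mk_left w y)
  have h2 : s(u,x) ∉ insert s(w,y) (M.erase e) := by
    intro h
    rcases Finset.mem_insert.mp h with h | h
    · have : u ∈ s(w,y) := h ▸ Sym2.mem_mk_left u x
      rcases Sym2.mem_iff.mp this with rfl | rfl
      · exact huw rfl
      · exact hu e he hy
    · exact hu _ (Finset.mem_of_mem_erase h) (Sym2.mem_mk_left u x)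
  have hN : IsMatchingSet G (insert s(u,x) (insert s(w,y) (M.erase e))) := by
    constructor
    · intro f hf
      rw [Finset.mem_coe, Finset.mem_insert, Finset.mem_insert] at hf
      rcases hf with rfl | rfl | hf
      · exact G.mem_edgeSet.mpr hux
      · exact G.mem_edgeSet.mpr hwy
      · exact hM.1.1 (Finset.mem_of_mem_erase hf)
    · intro f hf g hg hfg z hzf
      rw [Finset.mem_insert, Finset.mem_insert] at hf hg
      have huy : u ≠ y := wp_not_endpoint hu he hy
      have hwx : w ≠ x := wp_not_endpoint hw he hx
      rcases hf with rfl | rfl | hf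
      · -- f = s(u,x)
        rcases Sym2.mem_iff.mp hzf with rfl | rfl
        · -- z = u
          rcases hg with rfl | rfl | hg
          · exact absurd rfl hfg
          · exact not_mem_sym2 huw huy
          · exact fun hzm => hu _ (Finset.mem_of_mem_erase hg) hzm
        · -- z = x
          rcases hg with rfl | rfl | hg
          · exact absurd rfl hfg
          · exact not_mem_sym2 (fun h => hwx h.symm) hxy
          · intro hxg
            exact (Finset.ne_of_mem_erase hg)
              (edge_eq_of_mem hM (Finset.mem_of_mem_erase hg) he hxg hx)
      · -- f = s(w,y)
        rcases Sym2.mem_iff.mp hzf with rfl | rfl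
        · rcases hg with rfl | rfl | hg
          · exact not_mem_sym2 (fun h => huw h.symm) (fun h => hwx h)
          · exact absurd rfl hfg
          · exact fun hzm => hw _ (Finset.mem_of_mem_erase hg) hzm
        · rcases hg with rfl | rfl | hg
          · exact not_mem_sym2 (fun h => huy h.symm) (fun h => hxy h.symm)
          · exact absurd rfl hfg
          · intro hyg
            exact (Finset.ne_of_mem_erase hg)
              (edge_eq_of_mem hM (Finset.mem_of_mem_erase hg) he hyg hy)
      · -- f ∈ erase
        have hfM : f ∈ M := Finset.mem_of_mem_erase hf
        have hfe : f ≠ e := Finset.ne_of_mem_erase hf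
        rcases hg with rfl | rfl | hg
        · refine not_mem_sym2 ?_ ?_
          · exact fun h => hu f hfM (h ▸ hzf)
          · exact fun h => hfe (edge_eq_of_mem hM hfM he (h ▸ hzf) hx)
        · refine not_mem_sym2 ?_ ?_
          · exact fun h => hw f hfM (h ▸ hzf)
          · exact fun h => hfe (edge_eq_of_mem hM hfM he (h ▸ hzf) hy)
        · exact hM.1.2 f hfM g (Finset.mem_of_mem_erase hg) hfg z hzf
  have hle := hmax _ hN
  have hc1 : 1 ≤ M.card := Finset.card_pos.mpr ⟨e, he⟩
  rw [Finset.card_insert_of_notMem h2, Finset.card_insert_of_notMem h1,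
    Finset.card_erase_of_mem he] at hle
  omega

/-- cross-edge non-adjacency from inducedness. -/
lemma no_cross_adj (hM : IsInducedMatchingSet G M) {e f : Sym2 V} (he : e ∈ M) (hf : f ∈ M)
    (hef : e ≠ f) {x y : V} (hx : x ∈ e) (hy : y ∈ f) : ¬ G.Adj x y := by
  intro hadj
  have hmem := hM.2 x y ⟨e, he, hx⟩ ⟨f, hf, hy⟩ hadj
  have h1 : e = s(x,y) := edge_eq_of_mem hM he hmem hx (Sym2.mem_mk_left x y)
  have h2 : f = s(x,y) := edge_eq_of_mem hM hf hmem hy (Sym2.mem_mk_right x y)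
  exact hef (h1.trans h2.symm)

lemma covered_or_wp (M : Finset (Sym2 V)) (x : V) : Wp M x ∨ ∃ e ∈ M, x ∈ e := by
  by_cases h : ∃ e ∈ M, x ∈ e
  · exact Or.inr h
  · push_neg at h
    exact Or.inl h

/-- `e` carries a pendant triangle. -/
def isT (G : SimpleGraph V) (M : Finset (Sym2 V)) (e : Sym2 V) : Prop :=
  ∃ w, Wp M w ∧ G.Adj w (av e) ∧ G.Adj w (bv e)

open Classical in
noncomputable def aa (G : SimpleGraph V) (M : Finset (Sym2 V)) (e : Sym2 V) : V :=
  if isT G M e ∨ ¬ ∃ w, Wp M w ∧ G.Adj w (bv e) then av e else bv e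

open Classical in
noncomputable def bb (G : SimpleGraph V) (M : Finset (Sym2 V)) (e : Sym2 V) : V :=
  if isT G M e ∨ ¬ ∃ w, Wp M w ∧ G.Adj w (bv e) then bv e else av e

lemma aa_mem (e : Sym2 V) : aa G M e ∈ e := by
  unfold aa
  split
  · exact av_mem e
  · exact bv_mem e

lemma bb_mem (e : Sym2 V) : bb G M e ∈ e := by
  unfold bb
  split
  · exact bv_mem e
  · exact av_mem e

lemma aa_ne_bb (hM : IsInducedMatchingSet G M) {e : Sym2 V} (he : e ∈ M) :
    aa G M e ≠ bb G M e := by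
  unfold aa bb
  split
  · exact av_ne_bv hM he
  · exact (av_ne_bv hM he).symm

lemma adj_aa_bb (hM : IsInducedMatchingSet G M) {e : Sym2 V} (he : e ∈ M) :
    G.Adj (aa G M e) (bb G M e) := by
  unfold aa bb
  split
  · exact adj_av_bv hM he
  · exact (adj_av_bv hM he).symm

lemma mem_iff_aa_bb {x : V} {e : Sym2 V} : x ∈ e ↔ x = aa G M e ∨ x = bb G M e := by
  unfold aa bb
  split
  · exact mem_iff_av_bv
  · rw [mem_iff_av_bv]
    tauto

lemma aa_of_isT {e : Sym2 V} (h : isT G M e) : aa G M e = av e := if_pos (Or.inl h)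

lemma bb_of_isT {e : Sym2 V} (h : isT G M e) : bb G M e = bv e := if_pos (Or.inl h)

/-- For a pendant (non-triangle) edge, the `bb` endpoint has no uncovered neighbours. -/
lemma bb_clean (hM : IsInducedMatchingSet G M)
    (hmax : ∀ N : Finset (Sym2 V), IsMatchingSet G N → N.card ≤ M.card)
    {e : Sym2 V} (he : e ∈ M) (hnT : ¬ isT G M e) {w : V} (hw : Wp M w) :
    ¬ G.Adj w (bb G M e) := by
  unfold bb
  split_ifs with h
  · rcases h with h | h
    · exact absurd h hnT
    · exact fun hadj => h ⟨w, hw, hadj⟩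
  · push_neg at h
    obtain ⟨-, w₀, hw₀, hadj₀⟩ := h
    intro hadj
    by_cases hww : w = w₀
    · exact hnT ⟨w, hw, hadj, hww ▸ hadj₀⟩
    · exact no_double_attach hM hmax he (av_mem e) (bv_mem e) (av_ne_bv hM he)
        hw hw₀ hww hadj hadj₀

open Classical in
noncomputable def apex (G : SimpleGraph V) (M : Finset (Sym2 V)) (e : Sym2 V) : V :=
  if h : isT G M e then h.choose else av e

lemma apex_spec {e : Sym2 V} (h : isT G M e) :
    Wp M (apex G M e) ∧ G.Adj (apex G M e) (av e) ∧ G.Adj (apex G M e) (bv e) := by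
  unfold apex
  rw [dif_pos h]
  exact h.choose_spec

lemma apex_unique (hM : IsInducedMatchingSet G M)
    (hmax : ∀ N : Finset (Sym2 V), IsMatchingSet G N → N.card ≤ M.card)
    {e : Sym2 V} (he : e ∈ M) (h : isT G M e) {w : V} (hw : Wp M w) {x : V}
    (hx : x ∈ e) (hadj : G.Adj w x) : w = apex G M e := by
  obtain ⟨hwp, hav, hbv⟩ := apex_spec h
  by_contra hne
  rcases mem_iff_av_bv.mp hx with rfl | rfl
  · exact no_double_attach hM hmax he (av_mem e) (bv_mem e) (av_ne_bv hM he)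
      hw hwp hne hadj hbv
  · exact no_double_attach hM hmax he (bv_mem e) (av_mem e) (av_ne_bv hM he).symm
      hw hwp hne hadj hav

section CaseB
open Classical

variable (G : SimpleGraph V) (M : Finset (Sym2 V))

noncomputable def pick (e : Sym2 V) : V := if isT G M e then bb G M e else aa G M e

noncomputable def S0 : Finset V := M.image (pick G M)

noncomputable def DD (s : Finset V) : Finset V :=
  Finset.univ.filter (fun w => Wp M w ∧ ∀ x ∈ s, ¬ G.Adj w x)

noncomputable def P2 (s : Finset V) : Finset (Sym2 V) :=
  M.filter (fun e => ¬ isT G M e ∧ aa G M e ∉ s)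

noncomputable def T3 (s : Finset V) : Finset (Sym2 V) :=
  M.filter (fun e => isT G M e ∧ (aa G M e ∈ s ∨ bb G M e ∉ s))

noncomputable def tog (v : V) (s : Finset V) : Finset V :=
  if v ∈ s then s.erase v else insert v s

variable {G M}

lemma mem_DD {s : Finset V} {w : V} :
    w ∈ DD G M s ↔ Wp M w ∧ ∀ x ∈ s, ¬ G.Adj w x := by
  simp [DD]

lemma mem_P2 {s : Finset V} {e : Sym2 V} :
    e ∈ P2 G M s ↔ e ∈ M ∧ ¬ isT G M e ∧ aa G M e ∉ s := by
  simp [P2, and_assoc]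

lemma mem_T3 {s : Finset V} {e : Sym2 V} :
    e ∈ T3 G M s ↔ e ∈ M ∧ isT G M e ∧ (aa G M e ∈ s ∨ bb G M e ∉ s) := by
  simp [T3, and_assoc]

lemma tog_tog (v : V) (s : Finset V) : tog v (tog v s) = s := by
  unfold tog
  by_cases h : v ∈ s
  · rw [if_pos h, if_neg (Finset.notMem_erase v s), Finset.insert_erase h]
  · rw [if_neg h, if_pos (Finset.mem_insert_self v s), Finset.erase_insert h]

lemma tog_ne (v : V) (s : Finset V) : tog v s ≠ s := by
  unfold tog
  by_cases h : v ∈ s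
  · rw [if_pos h]
    intro heq
    exact (Finset.notMem_erase v s) (heq.symm ▸ h)
  · rw [if_neg h]
    intro heq
    exact h (heq ▸ Finset.mem_insert_self v s)

lemma mem_tog_of_ne {v x : V} {s : Finset V} (hxv : x ≠ v) : x ∈ tog v s ↔ x ∈ s := by
  unfold tog
  by_cases h : v ∈ s
  · rw [if_pos h, Finset.mem_erase]
    exact ⟨fun h' => h'.2, fun h' => ⟨hxv, h'⟩⟩
  · rw [if_neg h, Finset.mem_insert]
    exact ⟨fun h' => h'.resolve_left hxv, Or.inr⟩

lemma tog_subset {v : V} {s : Finset V} : tog v s ⊆ insert v s := by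
  unfold tog
  by_cases h : v ∈ s
  · rw [if_pos h]
    exact (Finset.erase_subset v s).trans (Finset.subset_insert v s)
  · rw [if_neg h]

lemma sign_tog (v : V) (s : Finset V) :
    (-1 : ℤ) ^ (tog v s).card + (-1) ^ s.card = 0 := by
  unfold tog
  by_cases h : v ∈ s
  · rw [if_pos h, Finset.card_erase_of_mem h]
    have h1 : 1 ≤ s.card := Finset.card_pos.mpr ⟨v, h⟩
    have h2 : (-1 : ℤ) ^ s.card = (-1) ^ (s.card - 1) * (-1) := by
      rw [← pow_succ]
      congr 1
      omega
    rw [h2]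
    ring
  · rw [if_neg h, Finset.card_insert_of_notMem h, pow_succ]
    ring

lemma indep_subset {s t : Finset V} (hst : s ⊆ t) (ht : IsIndepSet G t) :
    IsIndepSet G s := fun u hu v hv => ht u (hst hu) v (hst hv)

lemma indep_tog_of {v : V} {s : Finset V} (hs : IsIndepSet G s)
    (hv : ∀ x ∈ s, ¬ G.Adj v x) : IsIndepSet G (tog v s) := by
  unfold tog
  by_cases h : v ∈ s
  · rw [if_pos h]
    exact indep_subset (Finset.erase_subset v s) hs
  · rw [if_neg h]
    intro u hu w hw
    rcases Finset.mem_insert.mp hu with huv | hus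
    · subst huv
      rcases Finset.mem_insert.mp hw with hwv | hws
      · subst hwv
        exact fun hadj => G.ne_of_adj hadj rfl
      · exact hv w hws
    · rcases Finset.mem_insert.mp hw with hwv | hws
      · subst hwv
        exact fun hadj => hv u hus hadj.symm
      · exact hs u hus w hws

lemma vertex_ne (hM : IsInducedMatchingSet G M) {e f : Sym2 V} (he : e ∈ M) (hf : f ∈ M)
    (hef : e ≠ f) {x y : V} (hx : x ∈ e) (hy : y ∈ f) : x ≠ y :=
  fun h => hM.1.2 e he f hf hef x hx (h ▸ hy)

lemma no_wp_mem {s : Finset V} (hs : IsIndepSet G s) (hD : DD G M s = ∅)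
    {x : V} (hx : Wp M x) (hxs : x ∈ s) : False := by
  have hnot : x ∉ DD G M s := by rw [hD]; exact Finset.notMem_empty x
  rw [mem_DD] at hnot
  push_neg at hnot
  obtain ⟨y, hy, hadj⟩ := hnot hx
  exact hs x hxs y hy hadj

lemma DD_tog {v : V} {s : Finset V} (hnb : ∀ w, Wp M w → ¬ G.Adj w v) :
    DD G M (tog v s) = DD G M s := by
  ext w
  rw [mem_DD, mem_DD]
  constructor
  · rintro ⟨hw, hall⟩
    refine ⟨hw, fun x hx => ?_⟩
    by_cases hxv : x = v
    · exact hxv ▸ hnb w hw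
    · exact hall x ((mem_tog_of_ne hxv).mpr hx)
  · rintro ⟨hw, hall⟩
    refine ⟨hw, fun x hx => ?_⟩
    by_cases hxv : x = v
    · exact hxv ▸ hnb w hw
    · exact hall x ((mem_tog_of_ne hxv).mp hx)

lemma P2_tog {v : V} {s : Finset V} (hv : ∀ e ∈ M, ¬ isT G M e → aa G M e ≠ v) :
    P2 G M (tog v s) = P2 G M s := by
  ext e
  rw [mem_P2, mem_P2]
  constructor
  · rintro ⟨heM, hnT, hnmem⟩
    exact ⟨heM, hnT, fun hmem => hnmem ((mem_tog_of_ne (hv e heM hnT)).mpr hmem)⟩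
  · rintro ⟨heM, hnT, hnmem⟩
    exact ⟨heM, hnT, fun hmem => hnmem ((mem_tog_of_ne (hv e heM hnT)).mp hmem)⟩

lemma T3_tog {v : V} {s : Finset V}
    (hv : ∀ e ∈ M, isT G M e → aa G M e ≠ v ∧ bb G M e ≠ v) :
    T3 G M (tog v s) = T3 G M s := by
  ext e
  rw [mem_T3, mem_T3]
  constructor
  · rintro ⟨heM, hT, hor⟩
    refine ⟨heM, hT, ?_⟩
    rcases hor with h | h
    · exact Or.inl ((mem_tog_of_ne (hv e heM hT).1).mp h)
    · exact Or.inr (fun hmem => h ((mem_tog_of_ne (hv e heM hT).2).mpr hmem))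
  · rintro ⟨heM, hT, hor⟩
    refine ⟨heM, hT, ?_⟩
    rcases hor with h | h
    · exact Or.inl ((mem_tog_of_ne (hv e heM hT).1).mpr h)
    · exact Or.inr (fun hmem => h ((mem_tog_of_ne (hv e heM hT).2).mp hmem))

lemma T3_tog_aa (hM : IsInducedMatchingSet G M) {s : Finset V} (hs : IsIndepSet G s)
    {e0 : Sym2 V} (he0 : e0 ∈ T3 G M s) :
    T3 G M (tog (aa G M e0) s) = T3 G M s := by
  obtain ⟨he0M, hT0, hor0⟩ := mem_T3.mp he0
  ext e
  by_cases hee : e = e0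
  · subst hee
    rw [mem_T3, mem_T3]
    constructor
    · rintro _
      exact ⟨he0M, hT0, hor0⟩
    · rintro _
      refine ⟨he0M, hT0, ?_⟩
      by_cases haa : aa G M e ∈ s
      · have hbb : bb G M e ∉ s := fun hbb => hs _ haa _ hbb (adj_aa_bb hM he0M)
        refine Or.inr (fun hmem => hbb ?_)
        exact (mem_tog_of_ne (aa_ne_bb hM he0M).symm).mp hmem
      · refine Or.inl ?_
        unfold tog
        rw [if_neg haa]
        exact Finset.mem_insert_self _ _
  · rw [mem_T3, mem_T3]
    constructor
    · rintro ⟨heM, hT, hor⟩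
      have h1 : aa G M e ≠ aa G M e0 := vertex_ne hM heM he0M hee (aa_mem e) (aa_mem e0)
      have h2 : bb G M e ≠ aa G M e0 := vertex_ne hM heM he0M hee (bb_mem e) (aa_mem e0)
      refine ⟨heM, hT, ?_⟩
      rcases hor with h | h
      · exact Or.inl ((mem_tog_of_ne h1).mp h)
      · exact Or.inr (fun hmem => h ((mem_tog_of_ne h2).mpr hmem))
    · rintro ⟨heM, hT, hor⟩
      have h1 : aa G M e ≠ aa G M e0 := vertex_ne hM heM he0M hee (aa_mem e) (aa_mem e0)
      have h2 : bb G M e ≠ aa G M e0 := vertex_ne hM heM he0M hee (bb_mem e) (aa_mem e0)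
      refine ⟨heM, hT, ?_⟩
      rcases hor with h | h
      · exact Or.inl ((mem_tog_of_ne h1).mpr h)
      · exact Or.inr (fun hmem => h ((mem_tog_of_ne h2).mp hmem))

/-- Case (b): every uncovered vertex is attached to the free end of some pendant edge. -/
def CaseBHyp (G : SimpleGraph V) (M : Finset (Sym2 V)) : Prop :=
  ∀ w, Wp M w → ∃ e ∈ M, ¬ isT G M e ∧ G.Adj w (aa G M e)

lemma DD_empty_of_P2_empty (hb : CaseBHyp G M) {s : Finset V} (hP2 : P2 G M s = ∅) :
    DD G M s = ∅ := by
  rw [Finset.eq_empty_iff_forall_notMem]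
  intro w hw
  rw [mem_DD] at hw
  obtain ⟨hwp, hall⟩ := hw
  obtain ⟨e, heM, hnT, hadj⟩ := hb w hwp
  have hne : e ∉ P2 G M s := by rw [hP2]; exact Finset.notMem_empty e
  rw [mem_P2] at hne
  push_neg at hne
  exact hall _ (hne heM hnT) hadj

lemma pick_mem (e : Sym2 V) : pick G M e ∈ e := by
  unfold pick
  split
  · exact bb_mem e
  · exact aa_mem e

lemma mem_S0_iff {x : V} : x ∈ S0 G M ↔ ∃ e ∈ M, pick G M e = x := by
  simp [S0]

lemma S0_indep (hM : IsInducedMatchingSet G M) : IsIndepSet G (S0 G M) := by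
  intro u hu v hv
  rw [mem_S0_iff] at hu hv
  obtain ⟨e, he, rfl⟩ := hu
  obtain ⟨f, hf, rfl⟩ := hv
  by_cases hef : e = f
  · subst hef
    exact fun hadj => G.ne_of_adj hadj rfl
  · exact no_cross_adj hM he hf hef (pick_mem e) (pick_mem f)

lemma S0_card (hM : IsInducedMatchingSet G M) : (S0 G M).card = M.card := by
  refine Finset.card_image_of_injOn fun e he f hf h => ?_
  exact edge_eq_of_mem hM he hf (pick_mem e) (h ▸ pick_mem f)

lemma aa_not_mem_S0 (hM : IsInducedMatchingSet G M) {e : Sym2 V} (he : e ∈ M)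
    (hT : isT G M e) : aa G M e ∉ S0 G M := by
  rw [mem_S0_iff]
  rintro ⟨f, hf, hpf⟩
  have hfe : f = e := edge_eq_of_mem hM hf he (pick_mem f) (hpf ▸ aa_mem e)
  subst hfe
  unfold pick at hpf
  rw [if_pos hT] at hpf
  exact (aa_ne_bb hM hf) hpf.symm

lemma aa_mem_S0 {e : Sym2 V} (he : e ∈ M) (hnT : ¬ isT G M e) : aa G M e ∈ S0 G M := by
  rw [mem_S0_iff]
  exact ⟨e, he, by unfold pick; rw [if_neg hnT]⟩

lemma bb_mem_S0 {e : Sym2 V} (he : e ∈ M) (hT : isT G M e) : bb G M e ∈ S0 G M := by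
  rw [mem_S0_iff]
  exact ⟨e, he, by unfold pick; rw [if_pos hT]⟩

lemma P2_S0_empty : P2 G M (S0 G M) = ∅ := by
  rw [Finset.eq_empty_iff_forall_notMem]
  intro e he
  rw [mem_P2] at he
  exact he.2.2 (aa_mem_S0 he.1 he.2.1)

lemma T3_S0_empty (hM : IsInducedMatchingSet G M) : T3 G M (S0 G M) = ∅ := by
  rw [Finset.eq_empty_iff_forall_notMem]
  intro e he
  rw [mem_T3] at he
  obtain ⟨heM, hT, hor⟩ := he
  rcases hor with h | h
  · exact aa_not_mem_S0 hM heM hT h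
  · exact h (bb_mem_S0 heM hT)

lemma eq_S0_of_empty (hM : IsInducedMatchingSet G M) {s : Finset V}
    (hs : IsIndepSet G s) (hD : DD G M s = ∅) (hP : P2 G M s = ∅)
    (hT : T3 G M s = ∅) : s = S0 G M := by
  ext x
  constructor
  · intro hx
    rcases covered_or_wp M x with hwp | ⟨e, he, hxe⟩
    · exact (no_wp_mem hs hD hwp hx).elim
    · by_cases hT' : isT G M e
      · have hn : e ∉ T3 G M s := by rw [hT]; exact Finset.notMem_empty e
        rw [mem_T3] at hn
        push_neg at hn
        obtain ⟨hna, hbb⟩ := hn he hT'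
        rcases mem_iff_aa_bb.mp hxe with hx1 | hx2
        · exact absurd (hx1 ▸ hx) hna
        · rw [hx2]
          exact bb_mem_S0 he hT'
      · have hn : e ∉ P2 G M s := by rw [hP]; exact Finset.notMem_empty e
        rw [mem_P2] at hn
        push_neg at hn
        have haa : aa G M e ∈ s := hn he hT'
        rcases mem_iff_aa_bb.mp hxe with hx1 | hx2
        · rw [hx1]
          exact aa_mem_S0 he hT'
        · exact absurd (hx2 ▸ (adj_aa_bb hM he)) (hs _ haa _ hx)
  · intro hx
    rw [mem_S0_iff] at hx
    obtain ⟨e, he, rfl⟩ := hx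
    by_cases hT' : isT G M e
    · have hn : e ∉ T3 G M s := by rw [hT]; exact Finset.notMem_empty e
      rw [mem_T3] at hn
      push_neg at hn
      obtain ⟨hna, hbb⟩ := hn he hT'
      unfold pick
      rw [if_pos hT']
      exact hbb
    · have hn : e ∉ P2 G M s := by rw [hP]; exact Finset.notMem_empty e
      rw [mem_P2] at hn
      push_neg at hn
      unfold pick
      rw [if_neg hT']
      exact hn he hT'

section GMap
variable [LinearOrder V] [LinearOrder (Sym2 V)]
variable (G M)

noncomputable def gmap (s : Finset V) : Finset V :=
  if h1 : (DD G M s).Nonempty then tog ((DD G M s).min' h1) s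
  else if h2 : (P2 G M s).Nonempty then tog (bb G M ((P2 G M s).min' h2)) s
  else if h3 : (T3 G M s).Nonempty then tog (aa G M ((T3 G M s).min' h3)) s
  else s

variable {G M}

lemma min'_congr {α : Type*} [LinearOrder α] {A B : Finset α} (h : A = B)
    (hA : A.Nonempty) : A.min' hA = B.min' (h ▸ hA) := by subst h; rfl

lemma gmap_DD {s : Finset V} (h1 : (DD G M s).Nonempty) :
    gmap G M s = tog ((DD G M s).min' h1) s := dif_pos h1

lemma gmap_P2 {s : Finset V} (h1 : ¬ (DD G M s).Nonempty) (h2 : (P2 G M s).Nonempty) :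
    gmap G M s = tog (bb G M ((P2 G M s).min' h2)) s := by
  unfold gmap
  rw [dif_neg h1, dif_pos h2]

lemma gmap_T3 {s : Finset V} (h1 : ¬ (DD G M s).Nonempty) (h2 : ¬ (P2 G M s).Nonempty)
    (h3 : (T3 G M s).Nonempty) :
    gmap G M s = tog (aa G M ((T3 G M s).min' h3)) s := by
  unfold gmap
  rw [dif_neg h1, dif_neg h2, dif_pos h3]

lemma gmap_spec (hM : IsInducedMatchingSet G M)
    (hmax : ∀ N : Finset (Sym2 V), IsMatchingSet G N → N.card ≤ M.card)
    (hb : CaseBHyp G M) {s : Finset V} (hs : IsIndepSet G s) (hne : s ≠ S0 G M) :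
    IsIndepSet G (gmap G M s) ∧ gmap G M (gmap G M s) = s ∧ gmap G M s ≠ S0 G M ∧
      gmap G M s ≠ s ∧ (-1 : ℤ) ^ (gmap G M s).card + (-1) ^ s.card = 0 := by
  by_cases h1 : (DD G M s).Nonempty
  · -- branch 1 : toggle an uncovered vertex with no neighbours in s
    have hvmem := Finset.min'_mem _ h1
    rw [mem_DD] at hvmem
    obtain ⟨hvW, hvnadj⟩ := hvmem
    have hgs : gmap G M s = tog ((DD G M s).min' h1) s := gmap_DD h1
    have hnb : ∀ w, Wp M w → ¬ G.Adj w ((DD G M s).min' h1) :=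
      fun w hw hadj => no_W_adj hM hmax hw hvW hadj
    have hDD : DD G M (tog ((DD G M s).min' h1) s) = DD G M s := DD_tog hnb
    have h1' : (DD G M (tog ((DD G M s).min' h1) s)).Nonempty := by rw [hDD]; exact h1
    have hpivot : (DD G M (tog ((DD G M s).min' h1) s)).min' h1' = (DD G M s).min' h1 :=
      min'_congr hDD h1'
    have hgg : gmap G M (tog ((DD G M s).min' h1) s)
        = tog ((DD G M s).min' h1) (tog ((DD G M s).min' h1) s) := by
      rw [gmap_DD h1', hpivot]
    refine ⟨?_, ?_, ?_, ?_, ?_⟩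
    · rw [hgs]
      exact indep_tog_of hs hvnadj
    · rw [hgs, hgg, tog_tog]
    · rw [hgs]
      intro hcontra
      have hDS0 : DD G M (S0 G M) = ∅ := DD_empty_of_P2_empty hb P2_S0_empty
      rw [hcontra, hDS0] at hDD
      rw [← hDD] at h1
      exact Finset.not_nonempty_empty h1
    · rw [hgs]
      exact tog_ne _ s
    · rw [hgs]
      exact sign_tog _ s
  · by_cases h2 : (P2 G M s).Nonempty
    · -- branch 2 : toggle the free end of a pendant edge
      have he0 := Finset.min'_mem _ h2
      rw [mem_P2] at he0
      obtain ⟨he0M, hnT0, haa0⟩ := he0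
      have hgs : gmap G M s = tog (bb G M ((P2 G M s).min' h2)) s := gmap_P2 h1 h2
      have hnb : ∀ w, Wp M w → ¬ G.Adj w (bb G M ((P2 G M s).min' h2)) :=
        fun w hw => bb_clean hM hmax he0M hnT0 hw
      have hDD : DD G M (tog (bb G M ((P2 G M s).min' h2)) s) = DD G M s := DD_tog hnb
      have hDse : DD G M s = ∅ := Finset.not_nonempty_iff_eq_empty.mp h1
      have hP2' : P2 G M (tog (bb G M ((P2 G M s).min' h2)) s) = P2 G M s := by
        refine P2_tog fun f hf hnTf => ?_
        by_cases hfe : f = (P2 G M s).min' h2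
        · subst hfe
          exact aa_ne_bb hM hf
        · exact vertex_ne hM hf he0M hfe (aa_mem f) (bb_mem _)
      have h1' : ¬ (DD G M (tog (bb G M ((P2 G M s).min' h2)) s)).Nonempty := by
        rw [hDD, hDse]
        exact Finset.not_nonempty_empty
      have h2' : (P2 G M (tog (bb G M ((P2 G M s).min' h2)) s)).Nonempty := by
        rw [hP2']; exact h2
      have hpivot : (P2 G M (tog (bb G M ((P2 G M s).min' h2)) s)).min' h2'
          = (P2 G M s).min' h2 := min'_congr hP2' h2'
      have hgg : gmap G M (tog (bb G M ((P2 G M s).min' h2)) s)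
          = tog (bb G M ((P2 G M s).min' h2)) (tog (bb G M ((P2 G M s).min' h2)) s) := by
        rw [gmap_P2 h1' h2', hpivot]
      have hv : ∀ x ∈ s, ¬ G.Adj (bb G M ((P2 G M s).min' h2)) x := by
        intro x hx hadj
        rcases covered_or_wp M x with hwp | ⟨f, hf, hxf⟩
        · exact bb_clean hM hmax he0M hnT0 hwp hadj.symm
        · have hmem := hM.2 _ x ⟨_, he0M, bb_mem _⟩ ⟨f, hf, hxf⟩ hadj
          have he0eq : (P2 G M s).min' h2 = s(bb G M ((P2 G M s).min' h2), x) :=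
            edge_eq_of_mem hM he0M hmem (bb_mem _) (Sym2.mem_mk_left _ x)
          have hxe0 : x ∈ (P2 G M s).min' h2 := he0eq ▸ Sym2.mem_mk_right _ x
          rcases mem_iff_aa_bb.mp hxe0 with hx1 | hx2
          · exact haa0 (hx1 ▸ hx)
          · exact G.ne_of_adj hadj hx2.symm
      refine ⟨?_, ?_, ?_, ?_, ?_⟩
      · rw [hgs]
        exact indep_tog_of hs hv
      · rw [hgs, hgg, tog_tog]
      · rw [hgs]
        intro hcontra
        rw [hcontra, P2_S0_empty] at hP2'
        rw [← hP2'] at h2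
        exact Finset.not_nonempty_empty h2
      · rw [hgs]
        exact tog_ne _ s
      · rw [hgs]
        exact sign_tog _ s
    · by_cases h3 : (T3 G M s).Nonempty
      · -- branch 3 : toggle the `aa` end of a triangle edge
        have he0 := Finset.min'_mem _ h3
        have he0' := he0
        rw [mem_T3] at he0'
        obtain ⟨he0M, hT0, hor0⟩ := he0'
        have hgs : gmap G M s = tog (aa G M ((T3 G M s).min' h3)) s := gmap_T3 h1 h2 h3
        have hDse : DD G M s = ∅ := Finset.not_nonempty_iff_eq_empty.mp h1
        have hP2e : P2 G M s = ∅ := Finset.not_nonempty_iff_eq_empty.mp h2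
        have hP2' : P2 G M (tog (aa G M ((T3 G M s).min' h3)) s) = P2 G M s := by
          refine P2_tog fun f hf hnTf => ?_
          have hfe : f ≠ (T3 G M s).min' h3 := fun h => hnTf (by rw [h]; exact hT0)
          exact vertex_ne hM hf he0M hfe (aa_mem f) (aa_mem _)
        have hDD' : DD G M (tog (aa G M ((T3 G M s).min' h3)) s) = ∅ :=
          DD_empty_of_P2_empty hb (by rw [hP2', hP2e])
        have hT3' : T3 G M (tog (aa G M ((T3 G M s).min' h3)) s) = T3 G M s :=
          T3_tog_aa hM hs he0
        have h1' : ¬ (DD G M (tog (aa G M ((T3 G M s).min' h3)) s)).Nonempty := by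
          rw [hDD']
          exact Finset.not_nonempty_empty
        have h2' : ¬ (P2 G M (tog (aa G M ((T3 G M s).min' h3)) s)).Nonempty := by
          rw [hP2', hP2e]
          exact Finset.not_nonempty_empty
        have h3' : (T3 G M (tog (aa G M ((T3 G M s).min' h3)) s)).Nonempty := by
          rw [hT3']; exact h3
        have hpivot : (T3 G M (tog (aa G M ((T3 G M s).min' h3)) s)).min' h3'
            = (T3 G M s).min' h3 := min'_congr hT3' h3'
        have hgg : gmap G M (tog (aa G M ((T3 G M s).min' h3)) s)
            = tog (aa G M ((T3 G M s).min' h3)) (tog (aa G M ((T3 G M s).min' h3)) s) := by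
          rw [gmap_T3 h1' h2' h3', hpivot]
        have hv : ∀ x ∈ s, ¬ G.Adj (aa G M ((T3 G M s).min' h3)) x := by
          intro x hx hadj
          by_cases haa : aa G M ((T3 G M s).min' h3) ∈ s
          · exact hs _ haa x hx hadj
          · rcases covered_or_wp M x with hwp | ⟨f, hf, hxf⟩
            · exact no_wp_mem hs hDse hwp hx
            · have hmem := hM.2 _ x ⟨_, he0M, aa_mem _⟩ ⟨f, hf, hxf⟩ hadj
              have he0eq : (T3 G M s).min' h3 = s(aa G M ((T3 G M s).min' h3), x) :=
                edge_eq_of_mem hM he0M hmem (aa_mem _) (Sym2.mem_mk_left _ x)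
              have hxe0 : x ∈ (T3 G M s).min' h3 := he0eq ▸ Sym2.mem_mk_right _ x
              rcases mem_iff_aa_bb.mp hxe0 with hx1 | hx2
              · exact G.ne_of_adj hadj hx1.symm
              · rcases hor0 with ha | hb'
                · exact haa ha
                · exact hb' (hx2 ▸ hx)
        refine ⟨?_, ?_, ?_, ?_, ?_⟩
        · rw [hgs]
          exact indep_tog_of hs hv
        · rw [hgs, hgg, tog_tog]
        · rw [hgs]
          intro hcontra
          rw [hcontra, T3_S0_empty hM] at hT3'
          rw [← hT3'] at h3
          exact Finset.not_nonempty_empty h3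
        · rw [hgs]
          exact tog_ne _ s
        · rw [hgs]
          exact sign_tog _ s
      · exact absurd (eq_S0_of_empty hM hs (Finset.not_nonempty_iff_eq_empty.mp h1)
          (Finset.not_nonempty_iff_eq_empty.mp h2)
          (Finset.not_nonempty_iff_eq_empty.mp h3)) hne

end GMap

lemma epsI_caseB (hM : IsInducedMatchingSet G M)
    (hmax : ∀ N : Finset (Sym2 V), IsMatchingSet G N → N.card ≤ M.card)
    (hb : CaseBHyp G M) : epsI G = (-1) ^ M.card := by
  classical
  letI : LinearOrder V := LinearOrder.lift' (Fintype.equivFin V) (Equiv.injective _)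
  haveI : Fintype (Sym2 V) := Fintype.ofFinite _
  letI : LinearOrder (Sym2 V) :=
    LinearOrder.lift' (Fintype.equivFin (Sym2 V)) (Equiv.injective _)
  have hS0 : S0 G M ∈ indepFinsets G := (mem_indepFinsets G).mpr (S0_indep hM)
  rw [epsI, ← Finset.add_sum_erase _ _ hS0]
  have hzero : ∑ s ∈ (indepFinsets G).erase (S0 G M), (-1 : ℤ) ^ s.card = 0 := by
    refine Finset.sum_involution (fun s _ => gmap G M s) ?_ ?_ ?_ ?_
    · intro s hsmem
      have hmem := Finset.mem_erase.mp hsmem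
      have hind := (mem_indepFinsets G).mp hmem.2
      have hspec := gmap_spec hM hmax hb hind hmem.1
      linarith [hspec.2.2.2.2]
    · intro s hsmem _
      have hmem := Finset.mem_erase.mp hsmem
      have hind := (mem_indepFinsets G).mp hmem.2
      exact (gmap_spec hM hmax hb hind hmem.1).2.2.2.1
    · intro s hsmem
      have hmem := Finset.mem_erase.mp hsmem
      have hind := (mem_indepFinsets G).mp hmem.2
      have hspec := gmap_spec hM hmax hb hind hmem.1
      rw [Finset.mem_erase]
      exact ⟨hspec.2.2.1, (mem_indepFinsets G).mpr hspec.1⟩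
    · intro s hsmem
      have hmem := Finset.mem_erase.mp hsmem
      have hind := (mem_indepFinsets G).mp hmem.2
      exact (gmap_spec hM hmax hb hind hmem.1).2.1
  rw [hzero, add_zero, S0_card hM]

end CaseB

section CaseA
variable {G : SimpleGraph V} {M : Finset (Sym2 V)} {w0 : V}

lemma nbr_structure (hM : IsInducedMatchingSet G M)
    (hmax : ∀ N : Finset (Sym2 V), IsMatchingSet G N → N.card ≤ M.card)
    (hw0 : Wp M w0) (hA : ∀ e ∈ M, ¬ isT G M e → ¬ G.Adj w0 (aa G M e))
    {y : V} (hadj : G.Adj w0 y) :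
    ∃ e ∈ M, isT G M e ∧ apex G M e = w0 ∧ y ∈ e := by
  rcases covered_or_wp M y with hyW | ⟨e, he, hye⟩
  · exact (no_W_adj hM hmax hw0 hyW hadj).elim
  · by_cases hT : isT G M e
    · exact ⟨e, he, hT, (apex_unique hM hmax he hT hw0 hye hadj).symm, hye⟩
    · rcases mem_iff_aa_bb.mp hye with hy1 | hy2
      · exact absurd (hy1 ▸ hadj) (hA e he hT)
      · exact absurd (hy2 ▸ hadj) (bb_clean hM hmax he hT hw0)

/-- the candidate vertex set of the star triangle around `w0`. -/
def CC (G : SimpleGraph V) (M : Finset (Sym2 V)) (w0 x : V) : Prop :=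
  x = w0 ∨ ∃ e ∈ M, isT G M e ∧ apex G M e = w0 ∧ x ∈ e

lemma CC_closed (hM : IsInducedMatchingSet G M)
    (hmax : ∀ N : Finset (Sym2 V), IsMatchingSet G N → N.card ≤ M.card)
    (hw0 : Wp M w0) (hA : ∀ e ∈ M, ¬ isT G M e → ¬ G.Adj w0 (aa G M e))
    {x y : V} (hx : CC G M w0 x) (hadj : G.Adj x y) : CC G M w0 y := by
  rcases hx with rfl | ⟨e, he, hT, hap, hxe⟩
  · exact Or.inr (nbr_structure hM hmax hw0 hA hadj)
  · rcases covered_or_wp M y with hyW | ⟨f, hf, hyf⟩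
    · exact Or.inl ((apex_unique hM hmax he hT hyW hxe hadj.symm).trans hap)
    · have hm := hM.2 x y ⟨e, he, hxe⟩ ⟨f, hf, hyf⟩ hadj
      have h1 : e = s(x,y) := edge_eq_of_mem hM he hm hxe (Sym2.mem_mk_left x y)
      exact Or.inr ⟨e, he, hT, hap, h1 ▸ Sym2.mem_mk_right x y⟩

lemma CC_all (hM : IsInducedMatchingSet G M)
    (hmax : ∀ N : Finset (Sym2 V), IsMatchingSet G N → N.card ≤ M.card)
    (hconn : G.Connected)
    (hw0 : Wp M w0) (hA : ∀ e ∈ M, ¬ isT G M e → ¬ G.Adj w0 (aa G M e))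
    (x : V) : CC G M w0 x := by
  have key : ∀ (u v : V) (p : G.Walk u v), CC G M w0 u → CC G M w0 v := by
    intro u v p
    induction p with
    | nil => exact id
    | cons h q ih => exact fun hu => ih (CC_closed hM hmax hw0 hA hu h)
  obtain ⟨p⟩ := hconn.preconnected w0 x
  exact key _ _ p (Or.inl rfl)

lemma all_T (hM : IsInducedMatchingSet G M)
    (hmax : ∀ N : Finset (Sym2 V), IsMatchingSet G N → N.card ≤ M.card)
    (hconn : G.Connected)
    (hw0 : Wp M w0) (hA : ∀ e ∈ M, ¬ isT G M e → ¬ G.Adj w0 (aa G M e))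
    {e : Sym2 V} (he : e ∈ M) : isT G M e ∧ apex G M e = w0 := by
  have h := CC_all hM hmax hconn hw0 hA (av e)
  rcases h with h1 | ⟨f, hf, hT, hap, havf⟩
  · exact (hw0 e he (h1 ▸ av_mem e)).elim
  · have hfe : f = e := edge_eq_of_mem hM hf he havf (av_mem e)
    subst hfe
    exact ⟨hT, hap⟩

lemma iso_friendship (hM : IsInducedMatchingSet G M)
    (hmax : ∀ N : Finset (Sym2 V), IsMatchingSet G N → N.card ≤ M.card)
    (hconn : G.Connected)
    (hw0 : Wp M w0) (hA : ∀ e ∈ M, ¬ isT G M e → ¬ G.Adj w0 (aa G M e)) :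
    Nonempty (G ≃g friendship M.card) := by
  classical
  set k := M.card with hk
  let σ : Fin k ≃ {e // e ∈ M} := M.equivFin.symm
  let φ : Option (Fin k × Fin 2) → V := fun o => match o with
    | none => w0
    | some (i, a) => if a = 0 then av ((σ i : {e // e ∈ M}) : Sym2 V) else bv (σ i)
  have hφmem : ∀ (i : Fin k) (a : Fin 2), φ (some (i,a)) ∈ ((σ i : {e // e ∈ M}) : Sym2 V) := by
    intro i a
    show (if a = 0 then av ((σ i : {e // e ∈ M}) : Sym2 V) else bv (σ i)) ∈ _
    split
    · exact av_mem _
    · exact bv_mem _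
  have hTi : ∀ i : Fin k, isT G M ((σ i : {e // e ∈ M}) : Sym2 V) ∧
      apex G M ((σ i : {e // e ∈ M}) : Sym2 V) = w0 :=
    fun i => all_T hM hmax hconn hw0 hA (σ i).2
  have hadj_w0 : ∀ (i : Fin k) (a : Fin 2), G.Adj w0 (φ (some (i,a))) := by
    intro i a
    obtain ⟨hT, hap⟩ := hTi i
    obtain ⟨-, hav, hbv⟩ := apex_spec hT
    show G.Adj w0 (if a = 0 then av ((σ i : {e // e ∈ M}) : Sym2 V) else bv (σ i))
    split
    · exact hap ▸ hav
    · exact hap ▸ hbv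
  have hedge_ne : ∀ i j : Fin k, i ≠ j →
      ((σ i : {e // e ∈ M}) : Sym2 V) ≠ ((σ j : {e // e ∈ M}) : Sym2 V) := by
    intro i j hij h
    exact hij (σ.injective (Subtype.ext h))
  have hinj : Function.Injective φ := by
    intro o1 o2 h
    match o1, o2 with
    | none, none => rfl
    | none, some (i, a) =>
      exfalso
      have hm2 := hφmem i a
      rw [← h] at hm2
      exact hw0 _ (σ i).2 hm2
    | some (i, a), none =>
      exfalso
      have hm2 := hφmem i a
      rw [h] at hm2
      exact hw0 _ (σ i).2 hm2
    | some (i, a), some (j, b) =>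
      have hij : i = j := by
        by_contra hne
        refine hM.1.2 _ (σ i).2 _ (σ j).2 (hedge_ne i j hne) _ (hφmem i a) ?_
        rw [h]
        exact hφmem j b
      subst hij
      have hab : a = b := by
        by_contra hne
        have hne' : (a = 0 ∧ b ≠ 0) ∨ (a ≠ 0 ∧ b = 0) := by
          fin_cases a <;> fin_cases b <;> simp_all
        have havbv := av_ne_bv hM (σ i).2
        rcases hne' with ⟨ha, hb⟩ | ⟨ha, hb⟩
        · rw [show φ (some (i,a)) = av ((σ i : {e // e ∈ M}) : Sym2 V) from if_pos ha,
            show φ (some (i,b)) = bv ((σ i : {e // e ∈ M}) : Sym2 V) from if_neg hb] at h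
          exact havbv h
        · rw [show φ (some (i,a)) = bv ((σ i : {e // e ∈ M}) : Sym2 V) from if_neg ha,
            show φ (some (i,b)) = av ((σ i : {e // e ∈ M}) : Sym2 V) from if_pos hb] at h
          exact havbv h.symm
      rw [hab]
  have hsurj : Function.Surjective φ := by
    intro x
    rcases CC_all hM hmax hconn hw0 hA x with rfl | ⟨e, he, hT, hap, hxe⟩
    · exact ⟨none, rfl⟩
    · refine ⟨some (σ.symm ⟨e, he⟩, if x = av e then 0 else 1), ?_⟩
      have hei : ((σ (σ.symm ⟨e, he⟩) : {e // e ∈ M}) : Sym2 V) = e := by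
        rw [Equiv.apply_symm_apply]
      rcases mem_iff_av_bv.mp hxe with hx1 | hx2
      · show (if (if x = av e then (0:Fin 2) else 1) = 0 then _ else _) = x
        rw [if_pos hx1, if_pos rfl, hei, hx1]
      · by_cases hxa : x = av e
        · show (if (if x = av e then (0:Fin 2) else 1) = 0 then _ else _) = x
          rw [if_pos hxa, if_pos rfl, hei, hxa]
        · show (if (if x = av e then (0:Fin 2) else 1) = 0 then _ else _) = x
          rw [if_neg hxa, if_neg (by decide : (1:Fin 2) ≠ 0), hei, hx2]
  have hrel : ∀ o1 o2, G.Adj (φ o1) (φ o2) ↔ (friendship k).Adj o1 o2 := by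
    intro o1 o2
    match o1, o2 with
    | none, none =>
      constructor
      · intro h
        exact absurd h (G.irrefl)
      · rintro ⟨hne, -⟩
        exact absurd rfl hne
    | none, some (i, a) =>
      constructor
      · intro _
        exact ⟨(fun h => nomatch h), Or.inl rfl⟩
      · intro _
        exact hadj_w0 i a
    | some (i, a), none =>
      constructor
      · intro _
        refine ⟨(fun h => nomatch h), Or.inr (Or.inl rfl)⟩
      · intro _
        exact (hadj_w0 i a).symm
    | some (i, a), some (j, b) =>
      by_cases hij : i = j
      · subst hij
        by_cases hab : a = b
        · subst hab
          constructor
          · intro h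
            exact absurd h (G.irrefl)
          · rintro ⟨hne, -⟩
            exact absurd rfl hne
        · constructor
          · intro _
            refine ⟨?_, Or.inr (Or.inr ⟨i, a, b, rfl, rfl⟩)⟩
            intro h
            apply hab
            injection h with h'
            exact (Prod.ext_iff.mp h').2
          · intro _
            have hadjavbv := adj_av_bv hM (σ i).2
            have hne' : (a = 0 ∧ b ≠ 0) ∨ (a ≠ 0 ∧ b = 0) := by
              fin_cases a <;> fin_cases b <;> simp_all
            rcases hne' with ⟨ha, hb⟩ | ⟨ha, hb⟩
            · show G.Adj (if a = 0 then _ else _) (if b = 0 then _ else _)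
              rw [if_pos ha, if_neg hb]
              exact hadjavbv
            · show G.Adj (if a = 0 then _ else _) (if b = 0 then _ else _)
              rw [if_neg ha, if_pos hb]
              exact hadjavbv.symm
      · constructor
        · intro h
          exact absurd h (no_cross_adj hM (σ i).2 (σ j).2 (hedge_ne i j hij)
            (hφmem i a) (hφmem j b))
        · rintro ⟨hne, h⟩
          exfalso
          rcases h with h | h | ⟨i', a', b', h1, h2⟩
          · exact nomatch h
          · exact nomatch h
          · simp only [Option.some.injEq, Prod.mk.injEq] at h1 h2
            exact hij (h1.1.trans h2.1.symm)
  have hbij : Function.Bijective φ := ⟨hinj, hsurj⟩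
  refine ⟨SimpleGraph.Iso.symm ?_⟩
  exact { toEquiv := Equiv.ofBijective φ hbij,
          map_rel_iff' := fun {o1 o2} => hrel o1 o2 }

end CaseA

section Glue
variable {G : SimpleGraph V}

lemma isMatchingSet_empty : IsMatchingSet G (∅ : Finset (Sym2 V)) :=
  ⟨by simp, fun e he => (Finset.notMem_empty e he).elim⟩

lemma isInducedMatchingSet_empty : IsInducedMatchingSet G (∅ : Finset (Sym2 V)) :=
  ⟨isMatchingSet_empty, fun x y hx _ _ => by
    obtain ⟨e, he, -⟩ := hx
    exact (Finset.notMem_empty e he).elim⟩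

lemma match_bddAbove :
    BddAbove {k | ∃ M : Finset (Sym2 V), IsMatchingSet G M ∧ M.card = k} := by
  haveI : Fintype (Sym2 V) := Fintype.ofFinite _
  refine ⟨Fintype.card (Sym2 V), ?_⟩
  rintro k ⟨N, -, rfl⟩
  exact Finset.card_le_univ N

lemma indMatch_bddAbove :
    BddAbove {k | ∃ M : Finset (Sym2 V), IsInducedMatchingSet G M ∧ M.card = k} := by
  haveI : Fintype (Sym2 V) := Fintype.ofFinite _
  refine ⟨Fintype.card (Sym2 V), ?_⟩
  rintro k ⟨N, -, rfl⟩
  exact Finset.card_le_univ N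

lemma card_le_matchNum {N : Finset (Sym2 V)} (hN : IsMatchingSet G N) :
    N.card ≤ matchNum G :=
  le_csSup match_bddAbove ⟨N, hN, rfl⟩

lemma exists_max_ind (G : SimpleGraph V) :
    ∃ M : Finset (Sym2 V), IsInducedMatchingSet G M ∧ M.card = indMatchNum G := by
  have hne : {k | ∃ M : Finset (Sym2 V), IsInducedMatchingSet G M ∧ M.card = k}.Nonempty :=
    ⟨0, ∅, isInducedMatchingSet_empty, Finset.card_empty⟩
  exact Nat.sSup_mem hne indMatch_bddAbove

/-- The master structural dichotomy for Cameron–Walker graphs. -/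
theorem eps_or_friendship (hconn : G.Connected)
    (hCW : matchNum G = indMatchNum G) :
    (∃ M : Finset (Sym2 V), IsInducedMatchingSet G M ∧
        epsI G = (-1) ^ M.card) ∨
      (∃ m : ℕ, Nonempty (G ≃g friendship m) ∧
        ∃ M : Finset (Sym2 V), IsInducedMatchingSet G M ∧ M.card = m) := by
  classical
  obtain ⟨M, hM, hcard⟩ := exists_max_ind G
  have hmax : ∀ N : Finset (Sym2 V), IsMatchingSet G N → N.card ≤ M.card := by
    intro N hN
    have h := card_le_matchNum hN
    rw [hCW, ← hcard] at h
    exact h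
  by_cases hb : CaseBHyp G M
  · exact Or.inl ⟨M, hM, epsI_caseB hM hmax hb⟩
  · unfold CaseBHyp at hb
    push_neg at hb
    obtain ⟨w0, hw0, hA⟩ := hb
    exact Or.inr ⟨M.card, iso_friendship hM hmax hconn hw0 hA, M, hM, rfl⟩

end Glue

end CW

/-- Let `G` be a finite simple connected graph with at least one edge
such that `μ(G) = ν(G)` (a Cameron–Walker graph).  If `G` is not isomorphic to a
friendship graph `F_m` with `m` even, then `deg h_G = α(G)`; if `G ≅ F_m` with `m ≥ 2`
even, then `deg h_G = α(G) - 1`. -/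
theorem degree_hPoly_cameronWalker {V : Type*} [Fintype V] (G : SimpleGraph V)
    (hconn : G.Connected) (hedge : ∃ u v, G.Adj u v)
    (hCW : matchNum G = indMatchNum G) :
    ((¬ ∃ m : ℕ, Even m ∧ Nonempty (G ≃g friendship m)) →
      (hPoly G).natDegree = indepNum G) ∧
    (∀ m : ℕ, 2 ≤ m → Even m → Nonempty (G ≃g friendship m) →
      (hPoly G).natDegree = indepNum G - 1) := by
  constructor
  · intro hnf
    rcases CW.eps_or_friendship hconn hCW with ⟨M, hM, heps⟩ | ⟨m, hiso, M, hM, hcard⟩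
    · refine natDegree_hPoly_of_epsI_ne G ?_
      rw [heps]
      exact pow_ne_zero _ (by norm_num)
    · by_cases hpar : Even m
      · exact absurd ⟨m, hpar, hiso⟩ hnf
      · refine natDegree_hPoly_of_epsI_ne G ?_
        obtain ⟨e⟩ := hiso
        have hodd : Odd m := Nat.not_even_iff_odd.mp hpar
        have hm1 : 1 ≤ m := by
          obtain ⟨t, ht⟩ := hodd
          omega
        rw [epsI_iso G _ e, FriendHelp.epsI_friendship hm1, hodd.neg_one_pow]
        norm_num
  · intro m hm2 hme hiso
    obtain ⟨e⟩ := hiso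
    rw [hPoly_iso G _ e, indepNum_iso G _ e, FriendHelp.indepNum_friendship (by omega : 1 ≤ m),
      FriendHelp.natDegree_hPoly_friendship_even hm2 hme]
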